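/- Let W be a Coxeter group and w, z, v ∈ W. Suppose that w ≤_R wz and w ≤_R wv in the right weak Bruhat order, and that wz ≤ wv in the strong Bruhat order. Then z ≤ v in the strong Bruhat order. -/

import Mathlib

open Polynomial

namespace PaperBase

variable {B : Type*} {W : Type*} [Group W] {M : CoxeterMatrix B} (cs : CoxeterSystem M W)

/-- The strong Bruhat order: `u ≤ w` iff some reduced word for `w` has a sublist that is a
reduced word for `u`. -/
def BruhatLE (u w : W) : Prop :=
  ∃ ω : List B, cs.IsReduced ω ∧ cs.wordProd ω = w ∧
    ∃ ω' : List B, ω'.Sublist ω ∧ cs.IsReduced ω' ∧ cs.wordProd ω' = u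

/-- The strict strong Bruhat order. -/
def BruhatLT (u w : W) : Prop := BruhatLE cs u w ∧ u ≠ w

/-- The right weak Bruhat order: `u ≤_R w` iff `ℓ(w) = ℓ(u) + ℓ(u⁻¹ w)`. -/
def RWeakLE (u w : W) : Prop := cs.length w = cs.length u + cs.length (u⁻¹ * w)

/-- `U_ω ↑ v` along a word `ω`. -/
noncomputable def upLWord (ω : List B) (v : W) : W :=
  ω.foldr (fun i x => if cs.length x < cs.length (cs.simple i * x) then cs.simple i * x else x) v

/-- `U_ω ↓ v` along a word `ω`. -/
noncomputable def downLWord (ω : List B) (v : W) : W :=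
  ω.foldr (fun i x => if cs.length (cs.simple i * x) < cs.length x then cs.simple i * x else x) v

/-- `v ↑ U_ω` along a word `ω`. -/
noncomputable def upRWord (v : W) (ω : List B) : W :=
  ω.foldl (fun x i => if cs.length x < cs.length (x * cs.simple i) then x * cs.simple i else x) v

/-- `v ↓ U_ω` along a word `ω`. -/
noncomputable def downRWord (v : W) (ω : List B) : W :=
  ω.foldl (fun x i => if cs.length (x * cs.simple i) < cs.length x then x * cs.simple i else x) v

/-- A chosen reduced word for `w`. -/
noncomputable def rword (w : W) : List B := (cs.exists_reduced_word' w).choose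

theorem rword_isReduced (w : W) : cs.IsReduced (rword cs w) :=
  (cs.exists_reduced_word' w).choose_spec.1

theorem rword_wordProd (w : W) : cs.wordProd (rword cs w) = w :=
  ((cs.exists_reduced_word' w).choose_spec.2).symm

/-- `U_w ↑ v` for `w : W`, computed along a chosen reduced word for `w`. -/
noncomputable def upL (w v : W) : W := upLWord cs (rword cs w) v

/-- `U_w ↓ v` for `w : W`. -/
noncomputable def downL (w v : W) : W := downLWord cs (rword cs w) v

/-- `v ↑ U_w` for `w : W`. -/
noncomputable def upR (v w : W) : W := upRWord cs v (rword cs w)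

/-- `v ↓ U_w` for `w : W`. -/
noncomputable def downR (v w : W) : W := downRWord cs v (rword cs w)

/-- The Demazure (0-Hecke) product `u ∘ w`. -/
noncomputable def dem (u w : W) : W := upRWord cs u (rword cs w)

/-- Left multiplication by the Hecke algebra generator `T_{s i}` on the free
`ℤ[q]`-module with basis `{T_w}`, realized as `W →₀ ℤ[q]`:
`T_s T_w = T_{sw}` if `sw > w`, and `T_s T_w = (q-1) T_w + q T_{sw}` if `sw < w`. -/
noncomputable def heckeMulSimple (i : B) (f : W →₀ Polynomial ℤ) : W →₀ Polynomial ℤ :=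
  f.sum fun w c =>
    if cs.length w < cs.length (cs.simple i * w)
    then Finsupp.single (cs.simple i * w) c
    else Finsupp.single w ((X - 1) * c) + Finsupp.single (cs.simple i * w) (X * c)

/-- Left multiplication by `T_{π ω}` along a word `ω`. -/
noncomputable def heckeMulWord (ω : List B) (f : W →₀ Polynomial ℤ) : W →₀ Polynomial ℤ :=
  ω.foldr (heckeMulSimple cs) f

/-- The product `T_x T_y` in the Hecke algebra, expanded in the basis `{T_w}`. -/
noncomputable def TT (x y : W) : W →₀ Polynomial ℤ :=
  heckeMulWord cs (rword cs x) (Finsupp.single y 1)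

open Classical in
/-- The linear functional `Λ_w` with `Λ_w (T_y) = q^{ℓ(y)}` if `y ≤ w`, else `0`. -/
noncomputable def Lam (w : W) (f : W →₀ Polynomial ℤ) : Polynomial ℤ :=
  f.sum fun y c => if BruhatLE cs y w then X ^ cs.length y * c else 0

/-- `Θ(x, y, w) = Λ_w (T_x T_{y⁻¹})`. -/
noncomputable def Theta (x y w : W) : Polynomial ℤ := Lam cs w (TT cs x y⁻¹)


open List CoxeterSystem
open scoped Classical

private theorem simple_conj_conj (i : B) (x : W) :
    cs.simple i * (cs.simple i * x * cs.simple i) * cs.simple i = x := by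
  simp [← mul_assoc, cs.simple_mul_simple_self, cs.simple_mul_simple_cancel_right]

private theorem simple_conj_eq_iff (i : B) (x : W) :
    cs.simple i * x * cs.simple i = cs.simple i ↔ x = cs.simple i := by
  constructor
  · intro h
    have := congrArg (fun y => cs.simple i * y * cs.simple i) h
    simpa [simple_conj_conj, ← mul_assoc, cs.simple_mul_simple_self] using this
  · rintro rfl; simp [cs.simple_mul_simple_cancel_right]

private noncomputable def nuFun (i : B) : W × ℤˣ → W × ℤˣ :=
  fun p => (cs.simple i * p.1 * cs.simple i, if p.1 = cs.simple i then -p.2 else p.2)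

private theorem nuFun_involutive (i : B) : Function.Involutive (nuFun cs i) := by
  intro ⟨t, e⟩
  by_cases h : t = cs.simple i
  · subst h
    simp [nuFun, simple_conj_eq_iff, cs.simple_mul_simple_cancel_right]
  · have h2 : ¬ (cs.simple i * t * cs.simple i = cs.simple i) := by
      rw [simple_conj_eq_iff]; exact h
    simp only [nuFun, if_neg h, if_neg h2, simple_conj_conj]

private noncomputable def nuPerm (i : B) : Equiv.Perm (W × ℤˣ) :=
  (nuFun_involutive cs i).toPerm

private theorem nuPerm_apply (i : B) (p : W × ℤˣ) : nuPerm cs i p = nuFun cs i p := rfl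

private noncomputable def nuWord (ω : List B) : Equiv.Perm (W × ℤˣ) :=
  (ω.map (nuPerm cs)).prod

@[simp] private theorem nuWord_nil : nuWord cs ([] : List B) = 1 := rfl

private theorem nuWord_cons (i : B) (ω : List B) :
    nuWord cs (i :: ω) = nuPerm cs i * nuWord cs ω := by
  simp [nuWord]

private theorem ris_cons (i : B) (ω : List B) :
    cs.rightInvSeq (i :: ω) =
      ((cs.wordProd ω)⁻¹ * cs.simple i * cs.wordProd ω) :: cs.rightInvSeq ω := rfl

private theorem nuWord_apply (ω : List B) (t : W) (e : ℤˣ) :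
    nuWord cs ω (t, e) =
      (cs.wordProd ω * t * (cs.wordProd ω)⁻¹,
        (-1 : ℤˣ) ^ ((cs.rightInvSeq ω).count t) * e) := by
  induction ω generalizing e with
  | nil => simp
  | cons i ω ih =>
    rw [nuWord_cons, Equiv.Perm.mul_apply, ih, nuPerm_apply]
    have hcond : (cs.wordProd ω * t * (cs.wordProd ω)⁻¹ = cs.simple i)
        ↔ ((cs.wordProd ω)⁻¹ * cs.simple i * cs.wordProd ω = t) := by
      constructor
      · intro h; rw [← h]; group
      · intro h; rw [← h]; group
    rw [ris_cons, List.count_cons]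
    simp only [nuFun]
    refine Prod.ext ?_ ?_
    · simp only [cs.wordProd_cons, mul_inv_rev, cs.inv_simple]
      group
    · simp only [hcond, beq_iff_eq]
      by_cases h : (cs.wordProd ω)⁻¹ * cs.simple i * cs.wordProd ω = t
      · rw [if_pos h, if_pos h, pow_add, pow_one, mul_assoc, neg_one_mul]
        rw [mul_neg]
      · rw [if_neg h, if_neg h, add_zero]

private theorem ris_append (α β : List B) :
    cs.rightInvSeq (α ++ β) =
      (cs.rightInvSeq α).map (fun x => (cs.wordProd β)⁻¹ * x * cs.wordProd β)
        ++ cs.rightInvSeq β := by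
  induction α with
  | nil => simp
  | cons i α ih =>
    rw [List.cons_append, ris_cons, ris_cons, ih, List.map_cons, List.cons_append]
    congr 1
    rw [cs.wordProd_append, mul_inv_rev]
    group

private theorem drop_alternatingWord (i i' : B) :
    ∀ (j n : ℕ), j ≤ n →
      List.drop j (alternatingWord i i' n) = alternatingWord i i' (n - j) := by
  intro j
  induction j with
  | zero => intro n _; simp
  | succ j ih =>
    intro n hn
    match n, hn with
    | n + 1, hn =>
      rw [alternatingWord_succ', List.drop_succ_cons, ih n (by omega)]
      congr 1
      omega

private theorem getElem?_alternatingWord (i i' : B) (n k : ℕ) (h : k < n) :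
    (alternatingWord i i' n)[k]? = some (if Even (n - k - 1) then i' else i) := by
  have h1 : (alternatingWord i i' n)[k]? = (List.drop k (alternatingWord i i' n))[0]? := by
    simp [List.getElem?_drop]
  rw [h1, drop_alternatingWord i i' k n (by omega)]
  obtain ⟨p, hp⟩ : ∃ p, n - k = p + 1 := ⟨n - k - 1, by omega⟩
  have hp2 : p = n - k - 1 := by omega
  rw [hp, alternatingWord_succ', hp2]
  simp

private noncomputable def fAlt (i i' : B) (q : ℕ) : W :=
  (cs.wordProd (alternatingWord i i' q))⁻¹ * cs.simple (if Even q then i' else i)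
    * cs.wordProd (alternatingWord i i' q)

private theorem ris_alt_getD (i i' : B) (n k : ℕ) (h : k < n) :
    (cs.rightInvSeq (alternatingWord i i' n)).getD k 1 = fAlt cs i i' (n - k - 1) := by
  rw [cs.getD_rightInvSeq]
  have hdrop : (alternatingWord i i' n).drop (k + 1) = alternatingWord i i' (n - k - 1) := by
    rw [drop_alternatingWord i i' (k+1) n (by omega), Nat.sub_sub]
  rw [hdrop]
  have hget : (alternatingWord i i' n)[k]? = some (if Even (n - k - 1) then i' else i) := by
    rw [getElem?_alternatingWord i i' n k h]
  rw [hget]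
  rfl

private theorem simple_mul_pow_comm (i i' : B) (j : ℕ) :
    cs.simple i' * (cs.simple i * cs.simple i') ^ j
      = ((cs.simple i * cs.simple i') ^ j)⁻¹ * cs.simple i' := by
  induction j with
  | zero => simp
  | succ j ih =>
    have h1 : cs.simple i' * (cs.simple i * cs.simple i')
        = (cs.simple i * cs.simple i')⁻¹ * cs.simple i' := by
      rw [mul_inv_rev, cs.inv_simple, cs.inv_simple]
      group
    rw [pow_succ, ← mul_assoc, ih, mul_assoc, h1, ← mul_assoc, ← mul_inv_rev]
    rw [← pow_succ', pow_succ]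

private theorem fAlt_eq (i i' : B) (q : ℕ) :
    fAlt cs i i' q = (((cs.simple i * cs.simple i') ^ q)⁻¹) * cs.simple i' := by
  rcases Nat.even_or_odd q with he | ho
  · obtain ⟨r, rfl⟩ := he
    have hprod : cs.wordProd (alternatingWord i i' (r + r))
        = (cs.simple i * cs.simple i') ^ r := by
      rw [cs.prod_alternatingWord_eq_mul_pow]
      rw [if_pos ⟨r, rfl⟩]
      rw [one_mul]
      congr 1
      omega
    rw [fAlt, hprod, if_pos ⟨r, rfl⟩]
    rw [mul_assoc, simple_mul_pow_comm, ← mul_assoc, ← mul_inv_rev, ← pow_add]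
  · obtain ⟨r, rfl⟩ := ho
    have hprod : cs.wordProd (alternatingWord i i' (2 * r + 1))
        = cs.simple i' * (cs.simple i * cs.simple i') ^ r := by
      rw [cs.prod_alternatingWord_eq_mul_pow]
      rw [if_neg (by simp [Nat.even_add_one, parity_simps])]
      have h2 : (2 * r + 1) / 2 = r := by omega
      rw [h2]
    have hodd : ¬ Even (2 * r + 1) := by simp [Nat.even_add_one, parity_simps]
    rw [fAlt, hprod, if_neg hodd]
    have hmid : cs.simple i' * cs.simple i * cs.simple i'
        = (cs.simple i * cs.simple i')⁻¹ * cs.simple i' := by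
      rw [mul_inv_rev, cs.inv_simple, cs.inv_simple]
    rw [mul_inv_rev]
    calc ((cs.simple i * cs.simple i') ^ r)⁻¹ * (cs.simple i')⁻¹ * cs.simple i
          * (cs.simple i' * (cs.simple i * cs.simple i') ^ r)
        = ((cs.simple i * cs.simple i') ^ r)⁻¹
            * (cs.simple i' * cs.simple i * cs.simple i')
            * (cs.simple i * cs.simple i') ^ r := by
          rw [cs.inv_simple]; group
      _ = ((cs.simple i * cs.simple i') ^ r)⁻¹ * (cs.simple i * cs.simple i')⁻¹
            * (cs.simple i' * (cs.simple i * cs.simple i') ^ r) := by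
          rw [hmid]; group
      _ = ((cs.simple i * cs.simple i') ^ r)⁻¹ * (cs.simple i * cs.simple i')⁻¹
            * (((cs.simple i * cs.simple i') ^ r)⁻¹ * cs.simple i') := by
          rw [simple_mul_pow_comm]
      _ = (((cs.simple i * cs.simple i') ^ (2 * r + 1))⁻¹) * cs.simple i' := by
          rw [(by ring : 2 * r + 1 = r + 1 + r), pow_add, pow_succ, mul_inv_rev, mul_inv_rev]
          group

private theorem fAlt_period (i i' : B) (q : ℕ) :
    fAlt cs i i' (q + M i i') = fAlt cs i i' q := by
  rw [fAlt_eq, fAlt_eq, pow_add, cs.simple_mul_simple_pow i i', mul_one]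

private theorem pow_eq_nuWord (i i' : B) (m : ℕ) :
    (nuPerm cs i * nuPerm cs i') ^ m = nuWord cs (alternatingWord i i' (2 * m)) := by
  induction m with
  | zero =>
    have : alternatingWord i i' 0 = [] := rfl
    simp [nuWord, this]
  | succ m ih =>
    have h1 : 2 * (m + 1) = (2 * m + 1) + 1 := by ring
    have h2 : alternatingWord i i' (2 * (m + 1))
        = i :: i' :: alternatingWord i i' (2 * m) := by
      rw [h1, alternatingWord_succ']
      rw [if_neg (by simp [Nat.even_add_one, parity_simps])]
      rw [alternatingWord_succ']
      rw [if_pos (by simp [parity_simps])]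
    rw [h2, nuWord_cons, nuWord_cons, ← ih, pow_succ']
    rw [mul_assoc]

private theorem ris_alt_take_eq_drop (i i' : B) :
    (cs.rightInvSeq (alternatingWord i i' (2 * M i i'))).take (M i i')
      = (cs.rightInvSeq (alternatingWord i i' (2 * M i i'))).drop (M i i') := by
  set m := M i i' with hm
  have hlen : (cs.rightInvSeq (alternatingWord i i' (2 * m))).length = 2 * m := by
    simp
  apply List.ext_getElem
  · simp [hlen]; omega
  · intro k h1 h2
    have hk : k < m := by simp [hlen] at h1; omega
    rw [List.getElem_take, List.getElem_drop]
    have e1 : (cs.rightInvSeq (alternatingWord i i' (2 * m)))[k]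
        = (cs.rightInvSeq (alternatingWord i i' (2 * m))).getD k 1 := by
      rw [List.getD_eq_getElem _ _ (by omega : k < (cs.rightInvSeq (alternatingWord i i' (2*m))).length)]
    have e2 : (cs.rightInvSeq (alternatingWord i i' (2 * m)))[m + k]
        = (cs.rightInvSeq (alternatingWord i i' (2 * m))).getD (m + k) 1 := by
      rw [List.getD_eq_getElem _ _ (by rw [hlen]; omega)]
    rw [e1, e2, ris_alt_getD cs i i' _ _ (by omega), ris_alt_getD cs i i' _ _ (by omega)]
    have e3 : 2 * m - k - 1 = (2 * m - (m + k) - 1) + m := by omega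
    rw [e3, fAlt_period]

private theorem nuWord_alt (i i' : B) :
    nuWord cs (alternatingWord i i' (2 * M i i')) = 1 := by
  apply Equiv.ext
  intro ⟨t, e⟩
  rw [nuWord_apply]
  have hπ : cs.wordProd (alternatingWord i i' (2 * M i i')) = 1 := by
    rw [cs.prod_alternatingWord_eq_mul_pow, if_pos ⟨M i i', by ring⟩, one_mul,
      (by omega : 2 * M i i' / 2 = M i i'), cs.simple_mul_simple_pow]
  have hcount : Even ((cs.rightInvSeq (alternatingWord i i' (2 * M i i'))).count t) := by
    set l := cs.rightInvSeq (alternatingWord i i' (2 * M i i')) with hl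
    have : l = l.take (M i i') ++ l.drop (M i i') := (List.take_append_drop _ _).symm
    rw [this, List.count_append, ← ris_alt_take_eq_drop]
    exact ⟨_, rfl⟩
  rw [hπ, hcount.neg_one_pow, one_mul]
  simp

private theorem nuLiftable : M.IsLiftable (nuPerm cs) := by
  intro i i'
  rw [pow_eq_nuWord, nuWord_alt]

private noncomputable def phi : W →* Equiv.Perm (W × ℤˣ) :=
  cs.lift ⟨nuPerm cs, nuLiftable cs⟩

private theorem phi_wordProd (ω : List B) : phi cs (cs.wordProd ω) = nuWord cs ω := by
  unfold CoxeterSystem.wordProd nuWord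
  rw [map_list_prod, List.map_map]
  congr 1
  apply List.map_congr_left
  intro i _
  exact cs.lift_apply_simple (nuLiftable cs) i

private theorem sgn_welldef {ω₁ ω₂ : List B} (h : cs.wordProd ω₁ = cs.wordProd ω₂) (t : W) :
    ((-1 : ℤˣ) ^ ((cs.rightInvSeq ω₁).count t)) = (-1 : ℤˣ) ^ ((cs.rightInvSeq ω₂).count t) := by
  have h2 : nuWord cs ω₁ (t, 1) = nuWord cs ω₂ (t, 1) := by
    rw [← phi_wordProd, ← phi_wordProd, h]
  rw [nuWord_apply, nuWord_apply] at h2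
  have := congrArg Prod.snd h2
  simpa using this

private theorem lis_eq_map_conj (ω : List B) :
    cs.leftInvSeq ω
      = (cs.rightInvSeq ω).map (fun x => cs.wordProd ω * x * (cs.wordProd ω)⁻¹) := by
  apply List.ext_getElem
  · simp
  · intro k h1 h2
    rw [List.getElem_map]
    have e1 : (cs.leftInvSeq ω)[k] = (cs.leftInvSeq ω).getD k 1 :=
      (List.getD_eq_getElem _ _ h1).symm
    have hk : k < (cs.rightInvSeq ω).length := by simpa using h2
    have e2 : (cs.rightInvSeq ω)[k]'hk = (cs.rightInvSeq ω).getD k 1 :=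
      (List.getD_eq_getElem _ _ hk).symm
    rw [e1, e2]
    have h3 := cs.getD_leftInvSeq_mul_wordProd ω k
    have h4 := cs.wordProd_mul_getD_rightInvSeq ω k
    calc (cs.leftInvSeq ω).getD k 1
        = ((cs.leftInvSeq ω).getD k 1 * cs.wordProd ω) * (cs.wordProd ω)⁻¹ := by group
      _ = cs.wordProd ω * (cs.rightInvSeq ω).getD k 1 * (cs.wordProd ω)⁻¹ := by
          rw [h3, ← h4]

/-- A word representing a reflection in which the reflection appears an odd number of
times in the right inversion sequence. -/
private theorem exists_odd_word {t : W} (ht : cs.IsReflection t) :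
    ∃ δ : List B, cs.wordProd δ = t ∧ Odd ((cs.rightInvSeq δ).count t) := by
  obtain ⟨v, j, rfl⟩ := ht
  set γ := rword cs v with hγ
  have hπγ : cs.wordProd γ = v := rword_wordProd cs v
  refine ⟨γ ++ j :: γ.reverse, ?_, ?_⟩
  · rw [cs.wordProd_append, cs.wordProd_cons, cs.wordProd_reverse, hπγ]
    group
  · set t := v * cs.simple j * v⁻¹ with htdef
    rw [ris_append]
    have hπβ : cs.wordProd (j :: γ.reverse) = cs.simple j * v⁻¹ := by
      rw [cs.wordProd_cons, cs.wordProd_reverse, hπγ]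
    rw [List.count_append]
    -- first part
    have hmap : ((cs.rightInvSeq γ).map
        (fun x => (cs.wordProd (j :: γ.reverse))⁻¹ * x * cs.wordProd (j :: γ.reverse))).count t
        = (cs.rightInvSeq γ).count (cs.simple j) := by
      have hinj : Function.Injective
          (fun x : W => (cs.wordProd (j :: γ.reverse))⁻¹ * x * cs.wordProd (j :: γ.reverse)) := by
        intro a b hab
        simpa using mul_left_cancel (mul_right_cancel hab)
      have himg : (fun x : W => (cs.wordProd (j :: γ.reverse))⁻¹ * x
          * cs.wordProd (j :: γ.reverse)) (cs.simple j) = t := by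
        simp [hπβ, htdef, mul_inv_rev, cs.inv_simple, mul_assoc,
          cs.simple_mul_simple_cancel_left]
      rw [← himg]
      exact List.count_map_of_injective _ _ hinj _
    -- second part
    have hris : cs.rightInvSeq (j :: γ.reverse)
        = t :: cs.rightInvSeq γ.reverse := by
      rw [ris_cons, cs.wordProd_reverse, hπγ, htdef]
      simp
    have hrev : (cs.rightInvSeq γ.reverse).count t = (cs.rightInvSeq γ).count (cs.simple j) := by
      rw [cs.rightInvSeq_reverse, List.count_reverse, lis_eq_map_conj, hπγ]
      have himg : (fun x : W => v * x * v⁻¹) (cs.simple j) = t := rfl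
      have hinj2 : Function.Injective (fun x : W => v * x * v⁻¹) := by
        intro a b hab
        simpa using mul_left_cancel (mul_right_cancel hab)
      rw [← himg]
      exact List.count_map_of_injective _ _ hinj2 _
    rw [hmap, hris, List.count_cons_self, hrev]
    exact ⟨(cs.rightInvSeq γ).count (cs.simple j), by ring⟩

/-- If `t` is a reflection with `0 < count` in the inversion sequence of a reduced word,
then it is a right inversion. -/
private theorem inv_of_count_pos {ω : List B} (hω : cs.IsReduced ω) {t : W}
    (h : 0 < (cs.rightInvSeq ω).count t) :
    cs.length (cs.wordProd ω * t) < cs.length (cs.wordProd ω) :=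
  (cs.isRightInversion_of_mem_rightInvSeq hω (List.count_pos_iff.mp h)).2

/-- The strong exchange property. -/
private theorem strongExchange {ω : List B} (hω : cs.IsReduced ω) {t : W}
    (ht : cs.IsReflection t)
    (hlt : cs.length (cs.wordProd ω * t) < cs.length (cs.wordProd ω)) :
    ∃ j, j < ω.length ∧ cs.wordProd ω * t = cs.wordProd (ω.eraseIdx j) := by
  suffices hmem : t ∈ cs.rightInvSeq ω by
    obtain ⟨j, hj, hjt⟩ := List.mem_iff_getElem.mp hmem
    refine ⟨j, by simpa using hj, ?_⟩
    rw [← cs.wordProd_mul_getD_rightInvSeq ω j, List.getD_eq_getElem _ _ hj, hjt]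
  rw [← List.count_pos_iff]
  by_contra hcount
  have hzero : (cs.rightInvSeq ω).count t = 0 := by omega
  set τ := rword cs (cs.wordProd ω * t) with hτ
  have hπτ : cs.wordProd τ = cs.wordProd ω * t := rword_wordProd cs _
  have hτred : cs.IsReduced τ := rword_isReduced cs _
  obtain ⟨δ, hπδ, hodd⟩ := exists_odd_word cs ht
  have hπ : cs.wordProd (τ ++ δ) = cs.wordProd ω := by
    rw [cs.wordProd_append, hπτ, hπδ, mul_assoc, ht.mul_self, mul_one]
  have hsgn := sgn_welldef cs hπ.symm t
  rw [hzero, pow_zero] at hsgn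
  -- compute count in τ ++ δ
  rw [ris_append, List.count_append] at hsgn
  have hmapcount : ((cs.rightInvSeq τ).map
      (fun x => (cs.wordProd δ)⁻¹ * x * cs.wordProd δ)).count t
      = (cs.rightInvSeq τ).count t := by
    have himg : (fun x : W => (cs.wordProd δ)⁻¹ * x * cs.wordProd δ) t = t := by
      show (cs.wordProd δ)⁻¹ * t * cs.wordProd δ = t
      rw [hπδ]
      rw [ht.inv]
      rw [ht.mul_self, one_mul]
    have hinj2 : Function.Injective (fun x : W => (cs.wordProd δ)⁻¹ * x * cs.wordProd δ) := by
      intro a b hab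
      simpa using mul_left_cancel (mul_right_cancel hab)
    conv_lhs => rw [← himg]
    exact List.count_map_of_injective _ _ hinj2 _
  have hτcount : (cs.rightInvSeq τ).count t = 0 := by
    by_contra h
    have h2 : cs.wordProd τ * t = cs.wordProd ω := by
      rw [hπτ, mul_assoc, ht.mul_self, mul_one]
    have h3 := inv_of_count_pos cs hτred (t := t) (by omega)
    rw [h2, hπτ] at h3
    omega
  rw [hmapcount, hτcount, zero_add] at hsgn
  rw [hodd.neg_one_pow] at hsgn
  norm_num at hsgn

/-- One step of the Bruhat order: right multiplication by a reflection which increases length. -/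
private def bstep (x y : W) : Prop :=
  ∃ t, cs.IsReflection t ∧ y = x * t ∧ cs.length x < cs.length y

/-- Bruhat order via chains of reflections. -/
private def bchain (x y : W) : Prop := Relation.ReflTransGen (bstep cs) x y

private theorem bchain_refl (x : W) : bchain cs x x := Relation.ReflTransGen.refl

private theorem bchain_trans {x y z : W} (h1 : bchain cs x y) (h2 : bchain cs y z) :
    bchain cs x z := Relation.ReflTransGen.trans h1 h2

private theorem bchain_step {x y : W} {t : W} (ht : cs.IsReflection t) (h : y = x * t)
    (hl : cs.length x < cs.length y) : bchain cs x y :=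
  Relation.ReflTransGen.single ⟨t, ht, h, hl⟩

private theorem bchain_simple_step {x : W} {k : B} (hl : cs.length x < cs.length (x * cs.simple k)) :
    bchain cs x (x * cs.simple k) :=
  bchain_step cs (cs.isReflection_simple k) rfl hl

/-- Every word contains a reduced subword with the same product. -/
private theorem exists_reduced_sublist (ω : List B) :
    ∃ ω', ω'.Sublist ω ∧ cs.IsReduced ω' ∧ cs.wordProd ω' = cs.wordProd ω := by
  induction ω using List.reverseRecOn with
  | nil => exact ⟨[], by simp, by simp [CoxeterSystem.IsReduced], by simp⟩
  | append_singleton β k ih =>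
    obtain ⟨β', hsub, hred, hprod⟩ := ih
    rcases cs.length_mul_simple (cs.wordProd β) k with hup | hdown
    · refine ⟨β' ++ [k], ?_, ?_, ?_⟩
      · exact hsub.append (List.Sublist.refl [k])
      · show cs.length (cs.wordProd (β' ++ [k])) = _
        rw [cs.wordProd_append, hprod]
        simp only [List.length_append, List.length_singleton]
        rw [cs.wordProd_singleton, hup, ← hprod, hred]
      · rw [cs.wordProd_append, cs.wordProd_append, hprod]
    · -- descent: use strong exchange on β'
      have hlt : cs.length (cs.wordProd β' * cs.simple k) < cs.length (cs.wordProd β') := by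
        rw [hprod]; omega
      obtain ⟨j, hj, hex⟩ := strongExchange cs hred (cs.isReflection_simple k) hlt
      refine ⟨β'.eraseIdx j, ?_, ?_, ?_⟩
      · exact ((β'.eraseIdx_sublist j).trans hsub).trans (by simp)
      · show cs.length (cs.wordProd (β'.eraseIdx j)) = _
        rw [← hex, hprod]
        have e := List.length_eraseIdx_add_one hj
        have hred' : cs.length (cs.wordProd β) = β'.length := by rw [← hprod]; exact hred
        omega
      · rw [← hex, hprod, cs.wordProd_append, cs.wordProd_singleton]

/-- Chain implies subword of EVERY reduced word (the subword property, one direction). -/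
private theorem bchain_subword {u w : W} (h : bchain cs u w) :
    ∀ τ : List B, cs.IsReduced τ → cs.wordProd τ = w →
      ∃ τ', τ'.Sublist τ ∧ cs.IsReduced τ' ∧ cs.wordProd τ' = u := by
  induction h with
  | refl => exact fun τ hτ hπ => ⟨τ, List.Sublist.refl τ, hτ, hπ⟩
  | @tail y z hxy hstep ih =>
    intro τ hτ hπ
    obtain ⟨t, ht, hz, hl⟩ := hstep
    have hlt : cs.length (cs.wordProd τ * t) < cs.length (cs.wordProd τ) := by
      rw [hπ, hz, mul_assoc, ht.mul_self, mul_one]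
      rw [← hz]
      exact hl
    obtain ⟨j, hj, hex⟩ := strongExchange cs hτ ht hlt
    have hy : cs.wordProd (τ.eraseIdx j) = y := by
      rw [← hex, hπ, hz, mul_assoc, ht.mul_self, mul_one]
    obtain ⟨γ, hγsub, hγred, hγprod⟩ := exists_reduced_sublist cs (τ.eraseIdx j)
    obtain ⟨τ', hsub', hred', hprod'⟩ := ih γ hγred (by rw [hγprod, hy])
    exact ⟨τ', (hsub'.trans hγsub).trans (τ.eraseIdx_sublist j), hred', hprod'⟩

/-- Key dichotomy lemma (via strong exchange). -/
private theorem lemE {y w t : W} {k : B} (ht : cs.IsReflection t) (hw : w = y * t)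
    (hyw : cs.length y < cs.length w)
    (hys : cs.length y < cs.length (y * cs.simple k)) :
    cs.length (y * cs.simple k) < cs.length (w * cs.simple k) ∨ w * cs.simple k = y := by
  set γ := rword cs y with hγ
  have hγred := rword_isReduced cs y
  have hγprod := rword_wordProd cs y
  have hlys : cs.length (y * cs.simple k) = cs.length y + 1 := by
    rcases cs.length_mul_simple y k with h | h <;> omega
  have hcatprod : cs.wordProd (γ ++ [k]) = y * cs.simple k := by
    rw [cs.wordProd_append, cs.wordProd_singleton, hγprod]
  have hlenγ : cs.length y = γ.length := by rw [← hγprod]; exact hγred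
  have hcat_red : cs.IsReduced (γ ++ [k]) := by
    show cs.length (cs.wordProd (γ ++ [k])) = _
    rw [hcatprod, hlys, List.length_append, List.length_singleton, hlenγ]
  set r := cs.simple k * t * cs.simple k with hr
  have hrrefl : cs.IsReflection r := by
    have := ht.conj (cs.simple k)
    rwa [cs.inv_simple] at this
  have hprod_r : (y * cs.simple k) * r = w * cs.simple k := by
    rw [hr, hw]
    have : cs.simple k * (cs.simple k * t * cs.simple k) = t * cs.simple k := by
      rw [← mul_assoc, ← mul_assoc, cs.simple_mul_simple_self, one_mul]
    rw [mul_assoc, this, ← mul_assoc]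
  rcases Nat.lt_or_ge (cs.length (y * cs.simple k)) (cs.length (w * cs.simple k)) with hlt | hge
  · exact Or.inl hlt
  · right
    have hne : cs.length ((y * cs.simple k) * r) ≠ cs.length (y * cs.simple k) :=
      hrrefl.length_mul_left_ne (y * cs.simple k)
    have hltr : cs.length (cs.wordProd (γ ++ [k]) * r) < cs.length (cs.wordProd (γ ++ [k])) := by
      rw [hcatprod]
      rw [hprod_r] at hne ⊢
      omega
    obtain ⟨j, hj, hex⟩ := strongExchange cs hcat_red hrrefl hltr
    rw [hcatprod, hprod_r] at hex
    rcases Nat.lt_or_ge j γ.length with hjlt | hjge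
    · exfalso
      rw [List.eraseIdx_append_of_lt_length hjlt] at hex
      have hw2 : w = cs.wordProd (γ.eraseIdx j) := by
        have := congrArg (fun x => x * cs.simple k) hex
        simpa [mul_assoc, cs.simple_mul_simple_self, cs.wordProd_append,
          cs.wordProd_singleton] using this
      have hlen := cs.length_wordProd_le (γ.eraseIdx j)
      rw [← hw2] at hlen
      have e := List.length_eraseIdx_add_one hjlt
      omega
    · have hjeq : j = γ.length := by
        simp only [List.length_append, List.length_singleton] at hj
        omega
      rw [hjeq, List.eraseIdx_append_of_length_le (le_refl γ.length)] at hex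
      simp only [Nat.sub_self, List.eraseIdx, List.append_nil] at hex
      exact hex.trans hγprod

private theorem bchain_cases {u w : W} (h : bchain cs u w) :
    u = w ∨ ∃ y, bchain cs u y ∧ bstep cs y w := by
  rcases Relation.ReflTransGen.cases_tail h with heq | ⟨y, h1, h2⟩
  · exact Or.inl heq.symm
  · exact Or.inr ⟨y, h1, h2⟩

private theorem bigLift : ∀ n : ℕ, ∀ u w : W, ∀ k : B, bchain cs u w → cs.length w ≤ n →
    ((cs.length (w * cs.simple k) < cs.length w →
       ((cs.length (u * cs.simple k) < cs.length u →
           bchain cs (u * cs.simple k) (w * cs.simple k))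
        ∧ (cs.length u < cs.length (u * cs.simple k) →
            bchain cs u (w * cs.simple k) ∧ bchain cs (u * cs.simple k) w)))
     ∧ (cs.length w < cs.length (w * cs.simple k) →
         cs.length u < cs.length (u * cs.simple k) →
         bchain cs (u * cs.simple k) (w * cs.simple k))) := by
  intro n
  induction n with
  | zero =>
    intro u w k h hw
    have hw1 : w = 1 := cs.length_eq_zero_iff.mp (by omega)
    have hu1 : u = w := by
      rcases bchain_cases cs h with rfl | ⟨y, _, ⟨t, _, _, hl⟩⟩
      · rfl
      · exfalso; subst hw1; simp at hl
    subst hu1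
    constructor
    · intro hws
      exfalso
      subst hw1
      simp [cs.length_simple] at hws
    · intro _ _; exact bchain_refl cs _
  | succ n ih =>
    intro u w k h hw
    rcases bchain_cases cs h with rfl | ⟨y, huy, ⟨t, ht, hz, hl⟩⟩
    · -- reflexive case
      constructor
      · intro hws
        exact ⟨fun _ => bchain_refl cs _, fun hus => by exfalso; omega⟩
      · intro _ _; exact bchain_refl cs _
    · have hyn : cs.length y ≤ n := by omega
      -- the conjugated reflection step from y*s to w*s
      have hrrefl : cs.IsReflection (cs.simple k * t * cs.simple k) := by
        have := ht.conj (cs.simple k)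
        rwa [cs.inv_simple] at this
      have hprodr : (y * cs.simple k) * (cs.simple k * t * cs.simple k) = w * cs.simple k := by
        rw [hz]
        have h2 : cs.simple k * (cs.simple k * t * cs.simple k) = t * cs.simple k := by
          rw [← mul_assoc, ← mul_assoc, cs.simple_mul_simple_self, one_mul]
        rw [mul_assoc, h2, ← mul_assoc]
      have hucanc : (u * cs.simple k) * cs.simple k = u :=
        cs.simple_mul_simple_cancel_right k
      have hwcanc : (w * cs.simple k) * cs.simple k = w :=
        cs.simple_mul_simple_cancel_right k
      rcases Nat.lt_or_ge (cs.length (y * cs.simple k)) (cs.length y) with hys | hys'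
      · -- descent at y
        have hlys : cs.length (y * cs.simple k) + 1 = cs.length y := by
          rcases cs.length_mul_simple y k with h' | h' <;> omega
        constructor
        · intro hws
          have hlws : cs.length (w * cs.simple k) + 1 = cs.length w := by
            rcases cs.length_mul_simple w k with h' | h' <;> omega
          have stepYsWs : bchain cs (y * cs.simple k) (w * cs.simple k) :=
            bchain_step cs hrrefl hprodr.symm (by omega)
          constructor
          · intro hus
            have h1 := ((ih u y k huy hyn).1 hys).1 hus
            exact bchain_trans cs h1 stepYsWs
          · intro hus
            obtain ⟨h1, h2⟩ := ((ih u y k huy hyn).1 hys).2 hus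
            exact ⟨bchain_trans cs h1 stepYsWs,
              bchain_trans cs h2 (bchain_step cs ht hz hl)⟩
        · intro hws hus
          have h2 := (((ih u y k huy hyn).1 hys).2 hus).2
          exact bchain_trans cs h2 (bchain_trans cs (bchain_step cs ht hz hl)
            (bchain_simple_step cs hws))
      · have hys2 : cs.length y < cs.length (y * cs.simple k) := by
          have := cs.length_mul_simple_ne y k
          omega
        have hlys : cs.length (y * cs.simple k) = cs.length y + 1 := by
          rcases cs.length_mul_simple y k with h' | h' <;> omega
        constructor
        · intro hws
          have hlws : cs.length (w * cs.simple k) + 1 = cs.length w := by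
            rcases cs.length_mul_simple w k with h' | h' <;> omega
          have hdi := lemE cs ht hz hl hys2
          have chainYWs : bchain cs y (w * cs.simple k) := by
            rcases hdi with hlt | heq
            · exact bchain_trans cs (bchain_simple_step cs hys2)
                (bchain_step cs hrrefl hprodr.symm hlt)
            · rw [heq]; exact bchain_refl cs _
          constructor
          · intro hus
            have hus_y : bchain cs (u * cs.simple k) y :=
              bchain_trans cs
                (bchain_step cs (cs.isReflection_simple k) hucanc.symm (by omega)) huy
            exact bchain_trans cs hus_y chainYWs
          · intro hus
            refine ⟨bchain_trans cs huy chainYWs, ?_⟩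
            have h3 := (ih u y k huy hyn).2 hys2 hus
            rcases hdi with hlt | heq
            · exact bchain_trans cs h3 (bchain_trans cs
                (bchain_step cs hrrefl hprodr.symm hlt)
                (bchain_step cs (cs.isReflection_simple k) hwcanc.symm (by omega)))
            · have hwys : w = y * cs.simple k := by
                rw [← heq, hwcanc]
              rw [hwys]
              exact h3
        · intro hws hus
          have h1 := (ih u y k huy hyn).2 hys2 hus
          have hlws : cs.length (w * cs.simple k) = cs.length w + 1 := by
            rcases cs.length_mul_simple w k with h' | h' <;> omega
          exact bchain_trans cs h1 (bchain_step cs hrrefl hprodr.symm (by omega))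

private theorem subword_chain : ∀ ω : List B, cs.IsReduced ω → ∀ ω' : List B, ω'.Sublist ω →
    cs.IsReduced ω' → bchain cs (cs.wordProd ω') (cs.wordProd ω) := by
  intro ω
  induction ω using List.reverseRecOn with
  | nil =>
    intro _ ω' hsub _
    rw [List.eq_nil_of_sublist_nil hsub]
    exact bchain_refl cs _
  | append_singleton β k ih =>
    intro hred ω' hsub hred'
    have hβred : cs.IsReduced β := by
      have := hred.take β.length
      rwa [List.take_left] at this
    have hπ : cs.wordProd (β ++ [k]) = cs.wordProd β * cs.simple k := by
      rw [cs.wordProd_append, cs.wordProd_singleton]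
    have hlfull : cs.length (cs.wordProd (β ++ [k])) = β.length + 1 := by
      rw [hred]; simp
    have hlβ : cs.length (cs.wordProd β) < cs.length (cs.wordProd (β ++ [k])) := by
      rw [hlfull, hβred]
      omega
    rcases List.sublist_append_iff.mp hsub with ⟨r₁, r₂, rfl, hr₁, hr₂⟩
    rcases List.sublist_cons_iff.mp hr₂ with hnil | ⟨r₃, rfl, hr₃⟩
    · rw [List.eq_nil_of_sublist_nil hnil] at hred' ⊢
      rw [List.append_nil] at hred' ⊢
      have hchain := ih hβred r₁ hr₁ hred'
      refine bchain_trans cs hchain ?_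
      rw [hπ]
      exact bchain_simple_step cs (by rw [← hπ]; exact hlβ)
    · rw [List.eq_nil_of_sublist_nil hr₃] at hred' ⊢
      have hr₁red : cs.IsReduced r₁ := by
        have := hred'.take r₁.length
        rwa [List.take_left] at this
      have hchain := ih hβred r₁ hr₁ hr₁red
      have hπ' : cs.wordProd (r₁ ++ [k]) = cs.wordProd r₁ * cs.simple k := by
        rw [cs.wordProd_append, cs.wordProd_singleton]
      have hl' : cs.length (cs.wordProd r₁) < cs.length (cs.wordProd r₁ * cs.simple k) := by
        rw [← hπ', hred', hr₁red]
        simp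
      have := (bigLift cs (cs.length (cs.wordProd β)) (cs.wordProd r₁) (cs.wordProd β) k
        hchain (le_refl _)).2 (by rw [← hπ]; exact hlβ) hl'
      rw [← hπ, ← hπ'] at this
      exact this

private theorem bruhatLE_of_bchain {u w : W} (h : bchain cs u w) : BruhatLE cs u w := by
  obtain ⟨τ', hsub, hred, hprod⟩ :=
    bchain_subword cs h (rword cs w) (rword_isReduced cs w) (rword_wordProd cs w)
  exact ⟨rword cs w, rword_isReduced cs w, rword_wordProd cs w, τ', hsub, hred, hprod⟩

private theorem bchain_of_bruhatLE {u w : W} (h : BruhatLE cs u w) : bchain cs u w := by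
  obtain ⟨ω, hred, hπ, ω', hsub, hred', hπ'⟩ := h
  rw [← hπ, ← hπ']
  exact subword_chain cs ω hred ω' hsub hred'

private theorem bruhatLE_inv {u w : W} (h : BruhatLE cs u w) : BruhatLE cs u⁻¹ w⁻¹ := by
  obtain ⟨ω, hred, hπ, ω', hsub, hred', hπ'⟩ := h
  refine ⟨ω.reverse, by rwa [cs.isReduced_reverse_iff], by rw [cs.wordProd_reverse, hπ],
    ω'.reverse, ?_, by rwa [cs.isReduced_reverse_iff], by rw [cs.wordProd_reverse, hπ']⟩
  exact List.reverse_sublist.mpr hsub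

private theorem main_cancel : ∀ n : ℕ, ∀ W₀ p q : W, cs.length W₀ ≤ n →
    cs.length (p * W₀) = cs.length p + cs.length W₀ →
    cs.length (q * W₀) = cs.length q + cs.length W₀ →
    bchain cs (p * W₀) (q * W₀) → bchain cs p q := by
  intro n
  induction n with
  | zero =>
    intro W₀ p q hn hp hq h
    have h1 : W₀ = 1 := cs.length_eq_zero_iff.mp (by omega)
    subst h1
    simpa using h
  | succ n ih =>
    intro W₀ p q hn hp hq h
    by_cases h1 : W₀ = 1
    · subst h1; simpa using h
    · obtain ⟨k, hk⟩ := cs.exists_rightDescent_of_ne_one h1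
      set W₁ := W₀ * cs.simple k with hW₁
      have hk' : cs.length W₁ < cs.length W₀ := hk
      have hW₀ : W₀ = W₁ * cs.simple k := (cs.simple_mul_simple_cancel_right k).symm
      have hlW₁ : cs.length W₁ + 1 = cs.length W₀ := by
        rcases cs.length_mul_simple W₀ k with h' | h' <;> (rw [← hW₁] at h'; omega)
      have hpw : p * W₀ = (p * W₁) * cs.simple k := by rw [hW₀, ← mul_assoc]
      have hqw : q * W₀ = (q * W₁) * cs.simple k := by rw [hW₀, ← mul_assoc]
      have hple : cs.length (p * W₁) ≤ cs.length p + cs.length W₁ := cs.length_mul_le p W₁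
      have hqle : cs.length (q * W₁) ≤ cs.length q + cs.length W₁ := cs.length_mul_le q W₁
      have h2 : cs.length (p * W₀) ≤ cs.length (p * W₁) + 1 := by
        rw [hpw]
        have := cs.length_mul_le (p * W₁) (cs.simple k)
        rwa [cs.length_simple] at this
      have h3 : cs.length (q * W₀) ≤ cs.length (q * W₁) + 1 := by
        rw [hqw]
        have := cs.length_mul_le (q * W₁) (cs.simple k)
        rwa [cs.length_simple] at this
      have hp1 : cs.length (p * W₁) = cs.length p + cs.length W₁ := by omega
      have hq1 : cs.length (q * W₁) = cs.length q + cs.length W₁ := by omega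
      have hpWs : (p * W₀) * cs.simple k = p * W₁ := by
        rw [hpw, cs.simple_mul_simple_cancel_right]
      have hqWs : (q * W₀) * cs.simple k = q * W₁ := by
        rw [hqw, cs.simple_mul_simple_cancel_right]
      have hqdesc : cs.length ((q * W₀) * cs.simple k) < cs.length (q * W₀) := by
        rw [hqWs]; omega
      have hpdesc : cs.length ((p * W₀) * cs.simple k) < cs.length (p * W₀) := by
        rw [hpWs]; omega
      have hbig := ((bigLift cs (cs.length (q * W₀)) (p * W₀) (q * W₀) k h
        (le_refl _)).1 hqdesc).1 hpdesc
      rw [hpWs, hqWs] at hbig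
      exact ih W₁ p q (by omega) hp1 hq1 hbig


/-- If `w ≤_R wz`, `w ≤_R wv` and `wz ≤ wv` (strong Bruhat order), then `z ≤ v`. -/
theorem stmt9 (w z v : W) (h1 : RWeakLE cs w (w * z)) (h2 : RWeakLE cs w (w * v))
    (h3 : BruhatLE cs (w * z) (w * v)) : BruhatLE cs z v := by
  have hz : cs.length (w * z) = cs.length w + cs.length z := by
    have h1' := h1
    unfold RWeakLE at h1'
    rwa [inv_mul_cancel_left] at h1'
  have hv : cs.length (w * v) = cs.length w + cs.length v := by
    have h2' := h2
    unfold RWeakLE at h2'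
    rwa [inv_mul_cancel_left] at h2'
  have hinv : BruhatLE cs (z⁻¹ * w⁻¹) (v⁻¹ * w⁻¹) := by
    have := bruhatLE_inv cs h3
    rwa [mul_inv_rev, mul_inv_rev] at this
  have hchain := bchain_of_bruhatLE cs hinv
  have hp : cs.length (z⁻¹ * w⁻¹) = cs.length z⁻¹ + cs.length w⁻¹ := by
    calc cs.length (z⁻¹ * w⁻¹) = cs.length ((w * z)⁻¹) := by rw [mul_inv_rev]
      _ = cs.length (w * z) := cs.length_inv _
      _ = cs.length w + cs.length z := hz
      _ = cs.length z⁻¹ + cs.length w⁻¹ := by rw [cs.length_inv, cs.length_inv, Nat.add_comm]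
  have hq : cs.length (v⁻¹ * w⁻¹) = cs.length v⁻¹ + cs.length w⁻¹ := by
    calc cs.length (v⁻¹ * w⁻¹) = cs.length ((w * v)⁻¹) := by rw [mul_inv_rev]
      _ = cs.length (w * v) := cs.length_inv _
      _ = cs.length w + cs.length v := hv
      _ = cs.length v⁻¹ + cs.length w⁻¹ := by rw [cs.length_inv, cs.length_inv, Nat.add_comm]
  have hmain := main_cancel cs (cs.length (w⁻¹ : W)) w⁻¹ z⁻¹ v⁻¹ (le_refl _) hp hq hchain
  have hle := bruhatLE_of_bchain cs hmain
  have := bruhatLE_inv cs hle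
  simpa using this


end PaperBase
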